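/- arXiv:1009.1515 — 6 statements merged into one kernel-verified Lean document; each statement's English description precedes it below -/
import Mathlib

section
/- Let g(w) = w(1 − w/2) on the complex plane. If |w| ≤ 1 and 0 ≤ arg(w) ≤ arccos(1/4), then |g(w)| ≤ |w| and 0 ≤ arg(g(w)) ≤ arg(w). -/
open Complex

/-- Properties of the iteration map `g(w) = w(1 − w/2)`: if `|w| ≤ 1` and
`0 ≤ arg w ≤ arccos(1/4)`, then `|g(w)| ≤ |w|` and `0 ≤ arg g(w) ≤ arg w`. -/
theorem g_contraction (w : ℂ) (hw : ‖w‖ ≤ 1)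
    (harg0 : 0 ≤ w.arg) (harg1 : w.arg ≤ Real.arccos (1 / 4)) :
    ‖w * (1 - w / 2)‖ ≤ ‖w‖ ∧
    0 ≤ (w * (1 - w / 2)).arg ∧ (w * (1 - w / 2)).arg ≤ w.arg := by
  rcases eq_or_ne w 0 with rfl | hw0
  · simp
  have habs_pos : 0 < ‖w‖ := norm_pos_iff.mpr hw0
  -- cos (arg w) ≥ 1/4
  have hcos : (1/4 : ℝ) ≤ Real.cos w.arg := by
    calc (1/4 : ℝ) = Real.cos (Real.arccos (1/4)) := by
          rw [Real.cos_arccos] <;> norm_num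
      _ ≤ Real.cos w.arg := by
          exact Real.cos_le_cos_of_nonneg_of_le_pi harg0 (Real.arccos_le_pi _) harg1
  have hre : (1/4 : ℝ) * ‖w‖ ≤ w.re := by
    have := Complex.norm_mul_cos_arg w
    nlinarith [habs_pos]
  have hre1 : w.re ≤ 1 := le_trans (Complex.re_le_norm w) hw
  have him : 0 ≤ w.im := Complex.arg_nonneg_iff.mp harg0
  -- |1 - w/2| ≤ 1
  have hsq : Complex.normSq (1 - w / 2) ≤ 1 := by
    have h1 : Complex.normSq w = ‖w‖ ^ 2 := (Complex.sq_norm w).symm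
    have h2 : ‖w‖ ^ 2 ≤ ‖w‖ := by nlinarith
    simp only [Complex.normSq_apply, Complex.sub_re, Complex.sub_im, Complex.one_re,
      Complex.one_im, Complex.div_ofNat_re, Complex.div_ofNat_im]
    have : w.re * w.re + w.im * w.im = Complex.normSq w := rfl
    nlinarith
  have habs2 : ‖1 - w / 2‖ ≤ 1 := by
    rw [← Real.sqrt_one]
    rw [Complex.norm_def]
    exact Real.sqrt_le_sqrt hsq
  have hre_u : (1/2 : ℝ) ≤ (1 - w / 2).re := by
    simp only [Complex.sub_re, Complex.one_re, Complex.div_ofNat_re]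
    linarith
  have hu0 : (1 - w / 2) ≠ 0 := by
    intro h
    rw [h] at hre_u
    simp at hre_u
    linarith
  have him_u : (1 - w / 2).im ≤ 0 := by
    simp only [Complex.sub_im, Complex.one_im, Complex.div_ofNat_im]
    linarith
  have hargu_nonpos : (1 - w / 2).arg ≤ 0 := by
    rcases lt_or_eq_of_le him_u with h | h
    · exact (Complex.arg_neg_iff.mpr h).le
    · exact le_of_eq (Complex.arg_eq_zero_iff.mpr ⟨by linarith, h⟩)
  have hargu_gt : -(Real.pi/2) < (1 - w / 2).arg := by
    have := Complex.abs_arg_lt_pi_div_two_iff.mpr (Or.inl (by linarith : 0 < (1 - w/2).re))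
    rw [abs_lt] at this
    linarith [this.1]
  have hargw_lt : w.arg < Real.pi / 2 := by
    calc w.arg ≤ Real.arccos (1/4) := harg1
      _ < Real.pi / 2 := (Real.arccos_lt_pi_div_two).mpr (by norm_num)
  have hmul : (w * (1 - w / 2)).arg = w.arg + (1 - w / 2).arg := by
    apply Complex.arg_mul hw0 hu0
    constructor
    · linarith
    · linarith [Real.pi_pos]
  refine ⟨?_, ?_, ?_⟩
  · rw [norm_mul]
    calc ‖w‖ * ‖1 - w / 2‖ ≤ ‖w‖ * 1 :=
          mul_le_mul_of_nonneg_left habs2 habs_pos.le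
      _ = ‖w‖ := mul_one _
  · rw [Complex.arg_nonneg_iff]
    have : (w * (1 - w / 2)).im = w.im * (1 - w.re) := by
      simp only [Complex.mul_im, Complex.sub_re, Complex.sub_im, Complex.one_re, Complex.one_im,
        Complex.div_ofNat_re, Complex.div_ofNat_im]
      ring
    rw [this]
    have h1 : w.re ≤ 1 := hre1
    nlinarith
  · rw [hmul]
    linarith
end

section
/- Let (e_h) be a sequence of complex numbers satisfying |e_{h+1}| ≤ |e_h|·(|y| + |e_h|/2) + q^h for all h ≥ m, where q ∈ (0,1) is fixed. Suppose there exist α, β ∈ (0,1) with |e_m| < α, |y| + α/2 < β, and αβ + q^m < α. Then |e_h| < α for all h ≥ m, and moreover |e_h| ≤ C·h·β_0^h for all h ≥ m, where β_0 = max(β, q) and some constant C depending only on the data. In particular e_h → 0. -/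
open Filter

/-- Abstract convergence criterion (Lemma 2): if `|e_{h+1}| ≤ |e_h|(|y| + |e_h|/2) + qʰ`
for `h ≥ m`, with `q ∈ (0,1)`, and if `α, β ∈ (0,1)` satisfy `|e_m| < α`,
`|y| + α/2 < β` and `αβ + qᵐ < α`, then `|e_h| < α` for all `h ≥ m`,
`|e_h| ≤ C·h·β₀ʰ` for `β₀ = max(β, q)` and some constant `C`, and `e_h → 0`. -/
theorem convergence_criterion (y : ℂ) (e : ℕ → ℂ) (q : ℝ) (hq0 : 0 < q) (hq1 : q < 1)
    (m : ℕ)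
    (hrec : ∀ h : ℕ, m ≤ h → ‖e (h + 1)‖ ≤
      ‖e h‖ * (‖y‖ + ‖e h‖ / 2) + q ^ h)
    (α β : ℝ) (hα : 0 < α ∧ α < 1) (hβ : 0 < β ∧ β < 1)
    (h1 : ‖e m‖ < α)
    (h2 : ‖y‖ + α / 2 < β)
    (h3 : α * β + q ^ m < α) :
    (∀ h : ℕ, m ≤ h → ‖e h‖ < α) ∧
    (∃ C : ℝ, 0 < C ∧ ∀ h : ℕ, m ≤ h → ‖e h‖ ≤ C * h * (max β q) ^ h) ∧
    Tendsto e atTop (nhds 0) := by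
  obtain ⟨hα0, hα1⟩ := hα
  obtain ⟨hβ0, hβ1⟩ := hβ
  -- m ≥ 1
  have hm1 : 1 ≤ m := by
    by_contra hm
    push_neg at hm
    interval_cases m
    simp only [pow_zero] at h3
    nlinarith
  -- Part 1
  have part1 : ∀ h : ℕ, m ≤ h → ‖e h‖ < α := by
    intro h hh
    induction h with
    | zero => omega
    | succ n ih =>
      rcases Nat.lt_or_ge m (n + 1) with hlt | hge
      · have hmn : m ≤ n := by omega
        have ihn := ih hmn
        have habs : (0:ℝ) ≤ ‖e n‖ := norm_nonneg _
        have hb : ‖y‖ + ‖e n‖ / 2 ≤ β := by nlinarith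
        have hb0 : (0:ℝ) ≤ ‖y‖ + ‖e n‖ / 2 := by
          have := norm_nonneg y; linarith
        have hprod : ‖e n‖ * (‖y‖ + ‖e n‖ / 2) ≤ α * β := by
          apply mul_le_mul ihn.le hb hb0 hα0.le
        have hqh : q ^ n ≤ q ^ m := pow_le_pow_of_le_one hq0.le hq1.le hmn
        calc ‖e (n + 1)‖ ≤
            ‖e n‖ * (‖y‖ + ‖e n‖ / 2) + q ^ n :=
              hrec n hmn
          _ ≤ α * β + q ^ m := by linarith
          _ < α := h3
      · have : m = n + 1 := le_antisymm hh hge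
        rwa [← this]
  -- setup for part 2
  set b := max β q with hbdef
  have hbβ : β ≤ b := le_max_left _ _
  have hbq : q ≤ b := le_max_right _ _
  have hb0 : 0 < b := lt_of_lt_of_le hβ0 hbβ
  have hb1 : b < 1 := max_lt hβ1 hq1
  -- key inductive estimate
  have key : ∀ k : ℕ, ‖e (m + k)‖ ≤ (α + k / b) * b ^ k := by
    intro k
    induction k with
    | zero => simpa using h1.le
    | succ k ih =>
      have hmk : m ≤ m + k := Nat.le_add_right _ _
      have habs : (0:ℝ) ≤ ‖e (m + k)‖ := norm_nonneg _
      have hlt := part1 (m + k) hmk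
      have hb' : ‖y‖ + ‖e (m + k)‖ / 2 ≤ b := by nlinarith
      have hb'0 : (0:ℝ) ≤ ‖y‖ + ‖e (m + k)‖ / 2 := by
        have := norm_nonneg y; linarith
      have hprod : ‖e (m + k)‖ * (‖y‖ + ‖e (m + k)‖ / 2)
          ≤ ((α + k / b) * b ^ k) * b :=
        mul_le_mul ih hb' hb'0 (by positivity)
      have hqle : q ^ (m + k) ≤ b ^ k := by
        calc q ^ (m + k) ≤ q ^ k :=
              pow_le_pow_of_le_one hq0.le hq1.le (Nat.le_add_left _ _)
          _ ≤ b ^ k := pow_le_pow_left₀ hq0.le hbq _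
      have hrec' := hrec (m + k) hmk
      have heq : ((α + k / b) * b ^ k) * b + b ^ k = (α + (k + 1 : ℕ) / b) * b ^ (k + 1) := by
        have hbne : b ≠ 0 := hb0.ne'
        push_cast
        field_simp
        ring
      calc ‖e (m + k + 1)‖ ≤
            ‖e (m + k)‖ * (‖y‖ + ‖e (m + k)‖ / 2)
              + q ^ (m + k) := hrec'
        _ ≤ ((α + k / b) * b ^ k) * b + b ^ k := by linarith
        _ = (α + (k + 1 : ℕ) / b) * b ^ (k + 1) := heq
  -- Part 2
  have part2 : ∃ C : ℝ, 0 < C ∧ ∀ h : ℕ, m ≤ h →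
      ‖e h‖ ≤ C * h * b ^ h := by
    refine ⟨(α + 1 / b) / b ^ m, by positivity, ?_⟩
    intro h hh
    obtain ⟨k, rfl⟩ := Nat.exists_eq_add_of_le hh
    have hk := key k
    have hbm : (0:ℝ) < b ^ m := by positivity
    have hbk : (0:ℝ) < b ^ k := by positivity
    have hpow : b ^ (m + k) = b ^ m * b ^ k := pow_add b m k
    -- need (α + k/b) * b^k ≤ ((α + 1/b)/b^m) * (m+k) * b^(m+k)
    have hcoef : α + (k:ℝ) / b ≤ (α + 1 / b) * (m + k : ℕ) := by
      have h1m : (1:ℝ) ≤ (m:ℝ) := by exact_mod_cast hm1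
      have hk0 : (0:ℝ) ≤ (k:ℝ) := Nat.cast_nonneg _
      have hmk : ((m + k : ℕ) : ℝ) = (m:ℝ) + (k:ℝ) := by push_cast; ring
      rw [hmk]
      have expand : (α + 1 / b) * ((m:ℝ) + (k:ℝ)) = α * ((m:ℝ) + (k:ℝ)) + ((m:ℝ) + (k:ℝ)) / b := by
        ring
      rw [expand]
      have e1 : α ≤ α * ((m:ℝ) + (k:ℝ)) := by nlinarith
      have e2 : (k:ℝ) / b ≤ ((m:ℝ) + (k:ℝ)) / b := by gcongr; linarith
      linarith
    calc ‖e (m + k)‖ ≤ (α + k / b) * b ^ k := hk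
      _ ≤ ((α + 1 / b) * (m + k : ℕ)) * b ^ k := by
          apply mul_le_mul_of_nonneg_right hcoef hbk.le
      _ = (α + 1 / b) / b ^ m * (m + k : ℕ) * b ^ (m + k) := by
          rw [hpow]; field_simp
  refine ⟨part1, part2, ?_⟩
  -- Part 3
  obtain ⟨C, hC0, hC⟩ := part2
  rw [tendsto_zero_iff_norm_tendsto_zero]
  have hg : Tendsto (fun h : ℕ => C * h * b ^ h) atTop (nhds 0) := by
    have := (tendsto_self_mul_const_pow_of_lt_one hb0.le hb1).const_mul C
    simpa [mul_assoc] using this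
  refine squeeze_zero_norm' ?_ hg
  filter_upwards [eventually_ge_atTop m] with h hh
  simpa using hC h hh
end

section
/- The theta-type function Θ(x) = ∑_{k≥1} (k^2 x^2 − 2) e^{−k^2 x^2/4} satisfies Θ(x) → 1 as x → 0+ and Θ(x) → 0 as x → ∞; moreover as x → ∞, Θ(x) ~ x^2 e^{−x^2/4}. -/
open Real Filter

/-- The theta-type limit distribution `Θ(x) = ∑_{k≥1}(k²x² − 2)e^{−k²x²/4}`. -/
noncomputable def Theta (x : ℝ) : ℝ :=
  ∑' k : ℕ, (((k : ℝ) + 1) ^ 2 * x ^ 2 - 2) * Real.exp (-((k : ℝ) + 1) ^ 2 * x ^ 2 / 4)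

section ThetaAux

open Complex Topology



lemma hasDerivAt_jacobiTheta₂_snd' (z : ℂ) {τ : ℂ} (hτ : 0 < im τ) :
    HasDerivAt (fun w ↦ jacobiTheta₂ z w)
      (∑' n : ℤ, (Real.pi : ℂ) * I * (n : ℂ) ^ 2 * jacobiTheta₂_term n z τ) τ := by
  let eval_snd_CLM : (ℂ × ℂ →L[ℂ] ℂ) →L[ℂ] ℂ :=
  { toFun := fun f ↦ f (0, 1)
    cont := continuous_id'.clm_apply continuous_const
    map_add' := by simp only [ContinuousLinearMap.add_apply, forall_const]
    map_smul' := by simp only [ContinuousLinearMap.coe_smul', Pi.smul_apply, smul_eq_mul,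
      RingHom.id_apply, forall_const] }
  have step1 : HasSum (fun n ↦ (jacobiTheta₂_term_fderiv n z τ) (0, 1))
      ((jacobiTheta₂_fderiv z τ) (0, 1)) := by
    apply eval_snd_CLM.hasSum (hasSum_jacobiTheta₂_term_fderiv z hτ)
  have step2 (n : ℤ) : (jacobiTheta₂_term_fderiv n z τ) (0, 1)
      = (Real.pi : ℂ) * I * (n : ℂ) ^ 2 * jacobiTheta₂_term n z τ := by
    simp only [jacobiTheta₂_term_fderiv, smul_add, ContinuousLinearMap.add_apply,
      ContinuousLinearMap.coe_smul', ContinuousLinearMap.coe_fst', Pi.smul_apply, smul_eq_mul,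
      mul_one, ContinuousLinearMap.coe_snd', mul_zero, zero_add, jacobiTheta₂_term,
      mul_comm _ (cexp _)]
  rw [funext step2] at step1
  have step3 : HasDerivAt (fun w ↦ jacobiTheta₂ z w) ((jacobiTheta₂_fderiv z τ) (0, 1)) τ := by
    exact ((hasFDerivAt_jacobiTheta₂ z hτ).comp τ (hasFDerivAt_prodMk_right z τ)).hasDerivAt
  rwa [← step1.tsum_eq] at step3


noncomputable def thA (t : ℝ) : ℝ := ∑' n : ℤ, (n : ℝ) ^ 2 * Real.exp (-Real.pi * n ^ 2 * t)
noncomputable def thB (t : ℝ) : ℝ := ∑' n : ℤ, Real.exp (-Real.pi * n ^ 2 * t)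

lemma term_eq {t : ℝ} (n : ℤ) :
    jacobiTheta₂_term n 0 (I * t) = (Real.exp (-Real.pi * n ^ 2 * t) : ℂ) := by
  rw [jacobiTheta₂_term]
  rw [show (2 * (Real.pi:ℂ) * I * n * 0 + Real.pi * I * n ^ 2 * (I * t))
      = ((-Real.pi * n ^ 2 * t : ℝ) : ℂ) by push_cast; ring_nf; rw [I_sq]; ring]
  exact (Complex.ofReal_exp _).symm

lemma im_I_mul (t : ℝ) : (I * (t : ℂ)).im = t := by simp

lemma hasSum_thB {t : ℝ} (ht : 0 < t) :
    HasSum (fun n : ℤ => Real.exp (-Real.pi * n ^ 2 * t)) (thB t) := by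
  have h := hasSum_jacobiTheta₂_term 0 (by rw [im_I_mul]; exact ht)
  rw [funext (term_eq (t := t))] at h
  have := (Complex.summable_ofReal.mp h.summable).hasSum
  exact this

lemma jacobiTheta₂_eq_thB {t : ℝ} (ht : 0 < t) :
    jacobiTheta₂ 0 (I * t) = (thB t : ℂ) := by
  have h := hasSum_jacobiTheta₂_term 0 (by rw [im_I_mul]; exact ht)
  rw [funext (term_eq (t := t))] at h
  rw [← h.tsum_eq, ← Complex.ofReal_tsum]
  exact congrArg _ (hasSum_thB ht).tsum_eq.symm



lemma summable_thA {t : ℝ} (ht : 0 < t) :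
    Summable (fun n : ℤ => (n : ℝ) ^ 2 * Real.exp (-Real.pi * n ^ 2 * t)) := by
  have h := summable_pow_mul_jacobiTheta₂_term_bound 0 ht 2
  refine h.congr fun n => ?_
  have h1 : ((|n| : ℤ) : ℝ) ^ 2 = (n : ℝ) ^ 2 := by
    push_cast
    exact sq_abs _
  rw [h1, show (-Real.pi * (t * (n:ℝ) ^ 2 - 2 * 0 * ((|n|:ℤ):ℝ))) = -Real.pi * n ^ 2 * t by ring]

lemma hasSum_thA {t : ℝ} (ht : 0 < t) :
    HasSum (fun n : ℤ => (n : ℝ) ^ 2 * Real.exp (-Real.pi * n ^ 2 * t)) (thA t) :=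
  (summable_thA ht).hasSum

lemma hasDerivAt_theta_real {t : ℝ} (ht : 0 < t) :
    HasDerivAt (fun w => jacobiTheta₂ 0 w) ((Real.pi : ℂ) * I * (thA t : ℂ)) (I * t) := by
  have h := hasDerivAt_jacobiTheta₂_snd' 0 (show 0 < (I * (t:ℂ)).im by simpa using ht)
  have h2 := (Complex.hasSum_ofReal.mpr (hasSum_thA ht)).mul_left ((Real.pi:ℂ) * I)
  have e : (fun n : ℤ => (Real.pi:ℂ) * I * ((((n:ℝ)^2 * Real.exp (-Real.pi * n^2 * t)) : ℝ) : ℂ))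
      = fun n : ℤ => (Real.pi:ℂ) * I * (n:ℂ)^2 * jacobiTheta₂_term n 0 (I * t) := by
    funext n; rw [term_eq]; push_cast; ring
  rw [e] at h2
  rwa [h2.tsum_eq] at h
section FE
variable {t : ℝ} (ht : 0 < t)

lemma hIt (t : ℝ) : -I * (I * (t : ℂ)) = (t : ℂ) := by
  rw [show -I * (I * (t:ℂ)) = -(I*I) * t by ring, I_mul_I]; ring

include ht

lemma hpt : -1 / (I * (t : ℂ)) = I * ((t⁻¹ : ℝ) : ℂ) := by
  have h0 : I * (t : ℂ) ≠ 0 := mul_ne_zero I_ne_zero (ofReal_ne_zero.mpr ht.ne')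
  rw [div_eq_iff h0]
  push_cast
  rw [show I * ((t:ℂ))⁻¹ * (I * t) = (I*I) * ((t:ℂ)⁻¹ * t) by ring, I_mul_I,
    inv_mul_cancel₀ (ofReal_ne_zero.mpr ht.ne')]
  ring

lemma cpow_half_eq : ((t : ℂ)) ^ (1/2 : ℂ) = ((Real.sqrt t : ℝ) : ℂ) := by
  rw [Real.sqrt_eq_rpow, Complex.ofReal_cpow ht.le]
  norm_num

lemma keyB : thB t = thB t⁻¹ / Real.sqrt t := by
  have hFE := jacobiTheta₂_functional_equation 0 (I * (t : ℂ))
  rw [hIt, hpt ht, zero_div, cpow_half_eq ht, jacobiTheta₂_eq_thB ht,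
    jacobiTheta₂_eq_thB (inv_pos.mpr ht)] at hFE
  have hs0 : Real.sqrt t ≠ 0 := (Real.sqrt_pos.mpr ht).ne'
  rw [← Complex.ofReal_inj]
  push_cast
  rw [hFE]
  simp
  field_simp

end FE
lemma keyA {t : ℝ} (ht : 0 < t) :
    Real.pi * thA t
      = thB t⁻¹ / (2 * t * Real.sqrt t) - Real.pi * thA t⁻¹ / (t^2 * Real.sqrt t) := by
  have h0 : I * (t : ℂ) ≠ 0 := mul_ne_zero I_ne_zero (ofReal_ne_zero.mpr ht.ne')
  have hs0 : Real.sqrt t ≠ 0 := (Real.sqrt_pos.mpr ht).ne'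
  -- derivative of LHS
  have hθ := hasDerivAt_theta_real ht
  -- derivative of RHS of functional equation
  have ha : HasDerivAt (fun w : ℂ => -I * w) (-I) (I * (t:ℂ)) := by
    simpa using (hasDerivAt_id (I * (t:ℂ))).const_mul (-I)
  have hb : HasDerivAt (fun w : ℂ => (-I * w) ^ (1/2 : ℂ))
      ((1/2 : ℂ) * (-I * (I * (t:ℂ))) ^ ((1/2 : ℂ) - 1) * (-I)) (I * (t:ℂ)) :=
    ha.cpow_const (by rw [hIt]; exact Or.inl (by simpa using ht))
  rw [hIt] at hb
  have hne : ((t:ℂ)) ^ (1/2 : ℂ) ≠ 0 := by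
    rw [cpow_half_eq ht]; exact_mod_cast (ofReal_ne_zero.mpr hs0)
  have hb' : HasDerivAt (fun w : ℂ => (-I * w) ^ (1/2 : ℂ)) ((1/2 : ℂ) * (-I) * ((Real.sqrt t : ℂ))⁻¹) (I * (t:ℂ)) := by
    convert hb using 1
    rw [show (1/2 : ℂ) - 1 = -(1/2 : ℂ) by ring, cpow_neg, cpow_half_eq ht]
    ring
  have hc : HasDerivAt (fun w : ℂ => ((-I * w) ^ (1/2 : ℂ))⁻¹)
      (-((1/2 : ℂ) * (-I) * ((Real.sqrt t : ℂ))⁻¹) / ((Real.sqrt t : ℂ))^2) (I * (t:ℂ)) := by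
    have := hb'.inv (by rw [hIt]; exact hne)
    rwa [hIt, cpow_half_eq ht] at this
  have hd : HasDerivAt (fun w : ℂ => -1 / w) (((I * (t:ℂ))^2)⁻¹) (I * (t:ℂ)) := by
    have := (hasDerivAt_inv h0).neg
    simp only [neg_neg] at this
    rw [show (fun w : ℂ => -1 / w) = -fun y => y⁻¹ by funext w; rw [Pi.neg_apply, neg_div, one_div]]
    exact this
  have he := hasDerivAt_theta_real (t := t⁻¹) (inv_pos.mpr ht)
  rw [← hpt ht] at he
  have hcomp : HasDerivAt (fun w : ℂ => jacobiTheta₂ 0 (-1 / w))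
      ((Real.pi : ℂ) * I * (thA t⁻¹ : ℂ) * ((I * (t:ℂ))^2)⁻¹) (I * (t:ℂ)) := he.comp _ hd
  have hG := hc.mul hcomp
  -- G equals θ
  have hFG : (fun w : ℂ => ((-I * w) ^ (1/2 : ℂ))⁻¹ * jacobiTheta₂ 0 (-1 / w))
      = fun w : ℂ => jacobiTheta₂ 0 w := by
    funext w
    rw [jacobiTheta₂_functional_equation 0 w]
    simp [zero_pow, one_div]
  simp only [Pi.mul_def] at hG
  rw [hFG] at hG
  have E := hθ.unique hG
  rw [hpt ht, jacobiTheta₂_eq_thB (inv_pos.mpr ht), hIt, cpow_half_eq ht,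
    show ((I * (t:ℂ))^2)⁻¹ = -(((t:ℂ))^2)⁻¹ by rw [mul_pow, I_sq, neg_one_mul, inv_neg]] at E
  have hts : (t : ℂ) = ((Real.sqrt t : ℝ) : ℂ)^2 := by
    rw [← Complex.ofReal_pow, Real.sq_sqrt ht.le]
  rw [← Complex.ofReal_inj]
  push_cast
  rw [hts]
  rw [hts] at E
  have hsC : ((Real.sqrt t : ℝ) : ℂ) ≠ 0 := ofReal_ne_zero.mpr hs0
  linear_combination (-I) * E + (Real.pi * (thA t : ℂ) + Real.pi * (((Real.sqrt t:ℝ):ℂ))⁻¹^5 * (thA t⁻¹ : ℂ) - (((Real.sqrt t:ℝ):ℂ))⁻¹^3 * (thB t⁻¹ : ℂ)/2) * I_sq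

lemma theta_eq {x t : ℝ} (hx : 0 < x) (ht' : t = x ^ 2 / (4 * Real.pi)) :
    Theta x = 1 - 2 * Real.pi * thA t⁻¹ / (t * Real.sqrt t) := by
  have hπ := Real.pi_pos
  have ht : 0 < t := by rw [ht']; positivity
  have hx2 : x ^ 2 = 4 * Real.pi * t := by rw [ht']; field_simp
  set F : ℤ → ℝ := fun n => ((n : ℝ) ^ 2 * x ^ 2 - 2) * Real.exp (-(n : ℝ) ^ 2 * x ^ 2 / 4)
    with hF
  have harg : ∀ n : ℤ, -Real.pi * (n : ℝ) ^ 2 * t = -(n : ℝ) ^ 2 * x ^ 2 / 4 := by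
    intro n; rw [ht']; field_simp
  have hsum : HasSum F (x ^ 2 * thA t - 2 * thB t) := by
    have h12 := ((hasSum_thA ht).mul_left (x ^ 2)).sub ((hasSum_thB ht).mul_left 2)
    have e : (fun n : ℤ => x ^ 2 * ((n : ℝ) ^ 2 * Real.exp (-Real.pi * n ^ 2 * t))
        - 2 * Real.exp (-Real.pi * n ^ 2 * t)) = F := by
      funext n; rw [hF]; simp only; rw [harg n]; ring
    exact e ▸ h12
  have hFeven : ∀ n : ℕ, F (-(n : ℤ)) = F (n : ℤ) := by
    intro n; rw [hF]; push_cast; ring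
  have h2 : HasSum (fun n : ℕ => 2 * F n) (x ^ 2 * thA t - 2 * thB t + F 0) := by
    have h := hsum.nat_add_neg
    have e : (fun n : ℕ => F (n : ℤ) + F (-(n : ℤ))) = fun n : ℕ => 2 * F n := by
      funext n; rw [hFeven n]; ring
    rwa [e] at h
  have hF0 : F 0 = -2 := by rw [hF]; norm_num
  have h3 := (hasSum_nat_add_iff' 1).mpr h2
  simp only [Finset.sum_range_one, Nat.cast_zero, hF0] at h3
  have h4 := h3.div_const 2
  have e4 : (fun n : ℕ => 2 * F (↑(n + 1)) / 2) = fun n : ℕ => F (↑(n + 1)) := by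
    funext n; ring
  rw [e4] at h4
  have h6 : Theta x = (x ^ 2 * thA t - 2 * thB t + -2 - 2 * -2) / 2 := by
    rw [Theta, ← h4.tsum_eq]
    congr 1; funext k; rw [hF]; push_cast; ring_nf
  rw [h6]
  have k1 := keyA ht
  have k2 := keyB ht
  have hs0 : Real.sqrt t ≠ 0 := (Real.sqrt_pos.mpr ht).ne'
  have hinv : t * t⁻¹ = 1 := mul_inv_cancel₀ ht.ne'
  linear_combination (thA t / 2) * hx2 + (2 * t) * k1 - k2
    + (thB t⁻¹ * (Real.sqrt t)⁻¹ - 2 * Real.pi * t⁻¹ * (Real.sqrt t)⁻¹ * thA t⁻¹) * hinv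
lemma thA_nonneg (u : ℝ) : 0 ≤ thA u :=
  tsum_nonneg fun n => by positivity

lemma thA_le {u : ℝ} (hu : 1 ≤ u) :
    thA u ≤ thA 1 * Real.exp (-Real.pi * (u - 1)) := by
  have h1 := (hasSum_thA one_pos).mul_right (Real.exp (-Real.pi * (u - 1)))
  refine hasSum_le (fun n => ?_) (hasSum_thA (lt_of_lt_of_le one_pos hu)) h1
  rcases eq_or_ne n 0 with rfl | hn
  · simp
  · have hn2 : (1 : ℝ) ≤ (n : ℝ) ^ 2 := by
      have h := Int.one_le_abs hn
      have : (1 : ℤ) ≤ n ^ 2 := by nlinarith [_root_.sq_abs n]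
      exact_mod_cast this
    have e : (n:ℝ)^2 * Real.exp (-Real.pi * (n:ℝ)^2 * 1) * Real.exp (-Real.pi * (u-1))
        = (n:ℝ)^2 * Real.exp ((-Real.pi * (n:ℝ)^2 * 1) + (-Real.pi * (u-1))) := by
      rw [Real.exp_add]; ring
    rw [e]
    gcongr
    have key : 0 ≤ ((n:ℝ)^2 - 1) * (u - 1) := mul_nonneg (by linarith) (by linarith)
    nlinarith [Real.pi_pos]

lemma tendsto_G : Tendsto (fun u : ℝ => 1 - 2 * Real.pi * thA u / (u⁻¹ * Real.sqrt u⁻¹))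
    atTop (𝓝 1) := by
  have hpi := Real.pi_pos
  have h0 : Tendsto (fun u : ℝ => 2 * Real.pi * thA u / (u⁻¹ * Real.sqrt u⁻¹)) atTop (𝓝 0) := by
    apply squeeze_zero' (g := fun u => (2 * Real.pi * thA 1 * Real.exp Real.pi) *
        (u ^ 2 * Real.exp (-u)))
    · filter_upwards [eventually_ge_atTop 1] with u hu
      have hu0 : 0 < u := lt_of_lt_of_le one_pos hu
      exact div_nonneg (mul_nonneg (by positivity) (thA_nonneg u)) (by positivity)
    · filter_upwards [eventually_ge_atTop 1] with u hu
      have hu0 : 0 < u := lt_of_lt_of_le one_pos hu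
      have hd : u⁻¹ * Real.sqrt u⁻¹ = (u * Real.sqrt u)⁻¹ := by
        rw [Real.sqrt_inv, mul_inv]
      rw [hd, div_eq_mul_inv, inv_inv]
      have hsu : Real.sqrt u ≤ u := by
        have h := Real.sqrt_le_sqrt (show u ≤ u ^ 2 by nlinarith)
        rwa [Real.sqrt_sq hu0.le] at h
      have h2 : Real.exp (-Real.pi * (u - 1)) ≤ Real.exp Real.pi * Real.exp (-u) := by
        rw [← Real.exp_add]
        apply Real.exp_le_exp.mpr
        nlinarith [Real.pi_gt_three]
      have hAu' : thA u ≤ thA 1 * (Real.exp Real.pi * Real.exp (-u)) :=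
        (thA_le hu).trans (mul_le_mul_of_nonneg_left h2 (thA_nonneg 1))
      calc 2 * Real.pi * thA u * (u * Real.sqrt u)
          ≤ 2 * Real.pi * (thA 1 * (Real.exp Real.pi * Real.exp (-u))) * (u * u) := by
            refine mul_le_mul (mul_le_mul_of_nonneg_left hAu' (by positivity))
              (mul_le_mul_of_nonneg_left hsu hu0.le) (by positivity)
              (mul_nonneg (by positivity) (mul_nonneg (thA_nonneg 1) (by positivity)))
        _ = 2 * Real.pi * thA 1 * Real.exp Real.pi * (u ^ 2 * Real.exp (-u)) := by ring
    · have := (Real.tendsto_pow_mul_exp_neg_atTop_nhds_zero 2).const_mul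
        (2 * Real.pi * thA 1 * Real.exp Real.pi)
      simpa using this
  have h1 := (tendsto_const_nhds (x := (1:ℝ)) (f := atTop (α := ℝ))).sub h0
  simpa using h1

lemma theta_tendsto_zero : Tendsto Theta (nhdsWithin 0 (Set.Ioi 0)) (𝓝 1) := by
  have hpi := Real.pi_pos
  have hu : Tendsto (fun x : ℝ => 4 * Real.pi / x ^ 2) (nhdsWithin 0 (Set.Ioi 0)) atTop := by
    have hsq : Tendsto (fun x : ℝ => x ^ 2) (nhdsWithin 0 (Set.Ioi 0))
        (nhdsWithin 0 (Set.Ioi 0)) := by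
      rw [tendsto_nhdsWithin_iff]
      constructor
      · have : Tendsto (fun x : ℝ => x ^ 2) (nhdsWithin 0 (Set.Ioi 0)) (𝓝 (0 ^ 2)) :=
          (continuous_pow 2).continuousAt.tendsto.mono_left nhdsWithin_le_nhds
        simpa using this
      · filter_upwards [self_mem_nhdsWithin] with x hx
        exact pow_pos (show (0:ℝ) < x from hx) 2
    have hinv : Tendsto (fun y : ℝ => 4 * Real.pi * y⁻¹) (nhdsWithin 0 (Set.Ioi 0)) atTop :=
      (tendsto_inv_nhdsGT_zero.const_mul_atTop (by positivity))
    have := hinv.comp hsq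
    simpa [Function.comp_def, div_eq_mul_inv] using this
  have hcomp := tendsto_G.comp hu
  refine hcomp.congr' ?_
  filter_upwards [self_mem_nhdsWithin] with x hx
  have hx0 : (0:ℝ) < x := hx
  have ht' : ((4 * Real.pi / x ^ 2))⁻¹ = x ^ 2 / (4 * Real.pi) := inv_div _ _
  have h5 := theta_eq hx0 ht'
  rw [Function.comp_apply, h5, inv_inv]
noncomputable def Cc : ℝ := ∑' k : ℕ, ((k:ℝ) + 2) ^ 2 * (1/2 : ℝ) ^ k

lemma summable_Cc : Summable (fun k : ℕ => ((k:ℝ) + 2) ^ 2 * (1/2 : ℝ) ^ k) := by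
  have h : ‖(1/2 : ℝ)‖ < 1 := by rw [Real.norm_eq_abs, abs_of_pos one_half_pos]; norm_num
  have h2 := summable_pow_mul_geometric_of_norm_lt_one 2 h
  have h1 := summable_pow_mul_geometric_of_norm_lt_one 1 h
  have h0 := summable_geometric_of_norm_lt_one h
  refine ((h2.add (h1.mul_left 4)).add (h0.mul_left 4)).congr fun k => ?_
  push_cast; ring

lemma r_le_half {x : ℝ} (hx : 2 ≤ x) : Real.exp (-x^2/4) ≤ 1/2 := by
  have h1 : Real.exp (-x^2/4) ≤ Real.exp (-1) := by
    apply Real.exp_le_exp.mpr; nlinarith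
  refine h1.trans ?_
  rw [Real.exp_neg, inv_le_comm₀ (Real.exp_pos 1) one_half_pos]
  nlinarith [Real.exp_one_gt_d9]

lemma tail_bound {x : ℝ} (hx : 2 ≤ x) (k : ℕ) :
    |(((k:ℝ) + 2) ^ 2 * x ^ 2 - 2) * Real.exp (-((k:ℝ) + 2) ^ 2 * x ^ 2 / 4)|
      ≤ ((k:ℝ) + 2) ^ 2 * (1/2 : ℝ) ^ k * (x ^ 2 * Real.exp (-x^2/4) * Real.exp (-x^2/4)) := by
  have hx2 : (4:ℝ) ≤ x ^ 2 := by nlinarith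
  have hk4 : (4:ℝ) ≤ ((k:ℝ) + 2) ^ 2 := by nlinarith [sq_nonneg ((k:ℝ)), Nat.cast_nonneg (α := ℝ) k]
  have hk2 : (1:ℝ) ≤ ((k:ℝ) + 2) ^ 2 * x ^ 2 := by
    have h16 := mul_le_mul hk4 hx2 (by norm_num) (by positivity)
    linarith
  have h1 : |(((k:ℝ) + 2) ^ 2 * x ^ 2 - 2)| ≤ ((k:ℝ) + 2) ^ 2 * x ^ 2 := by
    rw [abs_le]; constructor <;> nlinarith
  have h2 : Real.exp (-((k:ℝ) + 2) ^ 2 * x ^ 2 / 4)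
      ≤ (1/2 : ℝ) ^ k * (Real.exp (-x^2/4) * Real.exp (-x^2/4)) := by
    have e1 : Real.exp (-((k:ℝ) + 2) ^ 2 * x ^ 2 / 4)
        ≤ Real.exp ((k + 2 : ℕ) * (-x^2/4)) := by
      apply Real.exp_le_exp.mpr
      push_cast
      nlinarith [sq_nonneg ((k:ℝ)), Nat.cast_nonneg (α := ℝ) k]
    refine e1.trans ?_
    rw [Real.exp_nat_mul]
    have e2 : Real.exp (-x^2/4) ^ (k + 2) = Real.exp (-x^2/4) ^ k
        * (Real.exp (-x^2/4) * Real.exp (-x^2/4)) := by ring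
    rw [e2]
    have e3 : Real.exp (-x^2/4) ^ k ≤ (1/2:ℝ) ^ k :=
      pow_le_pow_left₀ (Real.exp_pos _).le (r_le_half hx) k
    exact mul_le_mul_of_nonneg_right e3 (by positivity)
  calc |(((k:ℝ) + 2) ^ 2 * x ^ 2 - 2) * Real.exp (-((k:ℝ) + 2) ^ 2 * x ^ 2 / 4)|
      = |(((k:ℝ) + 2) ^ 2 * x ^ 2 - 2)| * Real.exp (-((k:ℝ) + 2) ^ 2 * x ^ 2 / 4) := by
        rw [abs_mul, abs_of_pos (Real.exp_pos _)]
    _ ≤ (((k:ℝ) + 2) ^ 2 * x ^ 2) * ((1/2 : ℝ) ^ k * (Real.exp (-x^2/4) * Real.exp (-x^2/4))) := by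
        refine mul_le_mul h1 h2 (Real.exp_pos _).le (by positivity)
    _ = ((k:ℝ) + 2) ^ 2 * (1/2 : ℝ) ^ k * (x ^ 2 * Real.exp (-x^2/4) * Real.exp (-x^2/4)) := by
        ring
lemma theta_close {x : ℝ} (hx : 2 ≤ x) :
    |Theta x - (x^2 - 2) * Real.exp (-x^2/4)|
      ≤ Cc * (x ^ 2 * Real.exp (-x^2/4) * Real.exp (-x^2/4)) := by
  set f : ℕ → ℝ := fun k => (((k:ℝ) + 1) ^ 2 * x ^ 2 - 2) * Real.exp (-((k:ℝ) + 1) ^ 2 * x ^ 2 / 4)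
    with hf
  have hfk : ∀ k : ℕ, f (k + 1)
      = (((k:ℝ) + 2) ^ 2 * x ^ 2 - 2) * Real.exp (-((k:ℝ) + 2) ^ 2 * x ^ 2 / 4) := by
    intro k; rw [hf]; push_cast; ring_nf
  have hb : ∀ k : ℕ, |f (k + 1)|
      ≤ ((k:ℝ) + 2) ^ 2 * (1/2 : ℝ) ^ k * (x ^ 2 * Real.exp (-x^2/4) * Real.exp (-x^2/4)) := by
    intro k; rw [hfk k]; exact tail_bound hx k
  have hsb := summable_Cc.mul_right (x ^ 2 * Real.exp (-x^2/4) * Real.exp (-x^2/4))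
  have habs : Summable (fun k => |f (k + 1)|) :=
    Summable.of_nonneg_of_le (fun k => abs_nonneg _) hb hsb
  have hg : Summable (fun k => f (k + 1)) := habs.of_abs
  have hfs : Summable f := (summable_nat_add_iff 1).mp hg
  have hsplit : Theta x = f 0 + ∑' k, f (k + 1) := by
    rw [Theta, ← hfs.tsum_eq_zero_add]
  have hf0 : f 0 = (x ^ 2 - 2) * Real.exp (-x^2/4) := by
    rw [hf]; norm_num
  rw [hsplit, hf0, add_sub_cancel_left]
  calc |∑' k, f (k + 1)| ≤ ∑' k, |f (k + 1)| := by
        have h := norm_tsum_le_tsum_norm (by simpa [Real.norm_eq_abs] using habs :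
          Summable fun k => ‖f (k + 1)‖)
        simpa [Real.norm_eq_abs] using h
    _ ≤ ∑' k : ℕ, ((k:ℝ) + 2) ^ 2 * (1/2 : ℝ) ^ k
          * (x ^ 2 * Real.exp (-x^2/4) * Real.exp (-x^2/4)) := Summable.tsum_le_tsum hb habs hsb
    _ = Cc * (x ^ 2 * Real.exp (-x^2/4) * Real.exp (-x^2/4)) := tsum_mul_right

lemma tendsto_sq_div_four : Tendsto (fun x : ℝ => x ^ 2 / 4) atTop atTop :=
  (tendsto_pow_atTop two_ne_zero).atTop_div_const (by norm_num)

lemma tendsto_D : Tendsto (fun x : ℝ => x ^ 2 * Real.exp (-x^2/4)) atTop (𝓝 0) := by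
  have h1 := Real.tendsto_pow_mul_exp_neg_atTop_nhds_zero 1
  have h3 := h1.comp tendsto_sq_div_four
  have h4 := h3.const_mul (4:ℝ)
  rw [mul_zero] at h4
  refine h4.congr fun x => ?_
  rw [Function.comp_apply, show -(x^2/4) = -x^2/4 by ring]
  ring

lemma tendsto_E : Tendsto (fun x : ℝ => Real.exp (-x^2/4)) atTop (𝓝 0) := by
  have hneg : Tendsto (fun x : ℝ => -(x ^ 2 / 4)) atTop atBot :=
    tendsto_neg_atTop_atBot.comp tendsto_sq_div_four
  have h := Real.tendsto_exp_atBot.comp hneg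
  refine h.congr fun x => ?_
  rw [Function.comp_apply, show -(x^2/4) = -x^2/4 by ring]

lemma ratio_tendsto : Tendsto (fun x : ℝ => Theta x / (x ^ 2 * Real.exp (-x ^ 2 / 4)))
    atTop (𝓝 1) := by
  rw [← tendsto_sub_nhds_zero_iff]
  have hbound : ∀ᶠ x : ℝ in atTop, ‖Theta x / (x ^ 2 * Real.exp (-x ^ 2 / 4)) - 1‖
      ≤ Cc * Real.exp (-x^2/4) + 2/x^2 := by
    filter_upwards [eventually_ge_atTop 2] with x hx
    have hx0 : (0:ℝ) < x := lt_of_lt_of_le two_pos hx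
    have hE : (0:ℝ) < Real.exp (-x^2/4) := Real.exp_pos _
    have hD : (0:ℝ) < x ^ 2 * Real.exp (-x^2/4) := by positivity
    have e1 : Theta x / (x ^ 2 * Real.exp (-x ^ 2 / 4)) - 1
        = (Theta x - x ^ 2 * Real.exp (-x ^ 2 / 4)) / (x ^ 2 * Real.exp (-x ^ 2 / 4)) := by
      field_simp
    rw [Real.norm_eq_abs, e1, abs_div, abs_of_pos (show (0:ℝ) < x ^ 2 * Real.exp (-x ^ 2 / 4) by positivity)]
    rw [div_le_iff₀ (by positivity)]
    have e2 : |Theta x - x ^ 2 * Real.exp (-x ^ 2 / 4)|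
        ≤ Cc * (x ^ 2 * Real.exp (-x^2/4) * Real.exp (-x^2/4)) + 2 * Real.exp (-x^2/4) := by
      have h1 := theta_close hx
      have e3 : Theta x - x ^ 2 * Real.exp (-x ^ 2 / 4)
          = (Theta x - (x^2 - 2) * Real.exp (-x^2/4)) + (-2) * Real.exp (-x^2/4) := by ring
      rw [e3]
      refine (abs_add_le _ _).trans ?_
      rw [abs_mul]
      gcongr
      · norm_num
      · rw [abs_of_pos hE]
    refine e2.trans (le_of_eq ?_)
    field_simp
  have htend : Tendsto (fun x : ℝ => Cc * Real.exp (-x^2/4) + 2/x^2) atTop (𝓝 0) := by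
    have hterm1 := tendsto_E.const_mul Cc
    rw [mul_zero] at hterm1
    have hterm2 : Tendsto (fun x : ℝ => 2/x^2) atTop (𝓝 0) :=
      Tendsto.div_atTop tendsto_const_nhds (tendsto_pow_atTop two_ne_zero)
    have := hterm1.add hterm2
    simpa using this
  exact squeeze_zero_norm' hbound htend

lemma theta_atTop : Tendsto Theta atTop (𝓝 0) := by
  have h := ratio_tendsto.mul tendsto_D
  rw [mul_zero] at h
  refine h.congr' ?_
  filter_upwards [eventually_ge_atTop 2] with x hx
  have hD : (0:ℝ) < x ^ 2 * Real.exp (-x ^ 2 / 4) := by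
    have : (0:ℝ) < x := lt_of_lt_of_le two_pos hx
    positivity
  field_simp


end ThetaAux

/-- `Θ(x) → 1` as `x → 0⁺`, `Θ(x) → 0` as `x → ∞`, and `Θ(x) ~ x²e^{−x²/4}`
as `x → ∞`. -/
theorem theta_limits :
    Tendsto Theta (nhdsWithin 0 (Set.Ioi 0)) (nhds 1) ∧
    Tendsto Theta atTop (nhds 0) ∧
    Tendsto (fun x : ℝ => Theta x / (x ^ 2 * Real.exp (-x ^ 2 / 4))) atTop (nhds 1) :=
  ⟨theta_tendsto_zero, theta_atTop, ratio_tendsto⟩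
end

section
/- Let L be a Hankel contour going from −∞−i·0 around 0 to −∞+i·0 (equivalently, use the substitution t = −w^2 and flatten onto the real line). For every real a > 0, (1/(2πi)) ∫_L e^{−a√t} √t e^t dt = (1/(4√π))·(a^2 − 2)·e^{−a^2/4}. -/
open MeasureTheory Filter Complex Topology

section aux
variable (a : ℝ)

noncomputable def hankelE (w : ℝ) : ℂ := Complex.exp (Complex.I * a * w - (w : ℂ) ^ 2)

lemma hankelE_eq (w : ℝ) :
    hankelE a w = Complex.exp ((-1 : ℂ) * w ^ 2 + (Complex.I * a) * w + 0) := by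
  unfold hankelE; congr 1; ring

lemma norm_hankelE (w : ℝ) : ‖hankelE a w‖ = Real.exp (-w ^ 2) := by
  unfold hankelE
  rw [Complex.norm_exp]
  congr 1
  simp [Complex.sub_re, Complex.mul_re, Complex.mul_im, ← Complex.ofReal_pow]

lemma integrable_hankelE : Integrable (hankelE a) :=
  (integrable_cexp_quadratic' (b := (-1 : ℂ)) (by norm_num) (Complex.I * a) 0).congr
    (by filter_upwards with w; rw [hankelE_eq])

lemma integrable_sq_hankelE : Integrable (fun w : ℝ => (w : ℂ) ^ 2 * hankelE a w) := by
  refine Integrable.mono' (g := fun w : ℝ => w ^ 2 * Real.exp (-1 * w ^ 2)) ?_ ?_ ?_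
  · have := integrable_rpow_mul_exp_neg_mul_sq (b := 1) one_pos (s := 2) (by norm_num)
    simpa [Real.rpow_natCast] using this
  · apply Continuous.aestronglyMeasurable
    unfold hankelE
    continuity
  · filter_upwards with w
    rw [norm_mul, norm_hankelE]
    simp only [norm_pow, Complex.norm_real, Real.norm_eq_abs, neg_one_mul, sq_abs]
    simp [Complex.norm_real, sq_abs]

noncomputable def hankelF (w : ℝ) : ℂ :=
  (-(w : ℂ) / 2 - Complex.I * a / 4) * hankelE a w

lemma hasDerivAt_hankelF (w : ℝ) :
    HasDerivAt (hankelF a)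
      (((w : ℂ) ^ 2 + ((a : ℂ) ^ 2 / 4 - 1 / 2)) * hankelE a w) w := by
  have hw : HasDerivAt (fun w : ℝ => (w : ℂ)) 1 w := by
    simpa using (hasDerivAt_id w).ofReal_comp
  have h1 : HasDerivAt (fun w : ℝ => -(w : ℂ) / 2 - Complex.I * a / 4) (-1 / 2) w := by
    simpa using ((hw.neg.div_const 2).sub_const (Complex.I * a / 4))
  have hsq : HasDerivAt (fun w : ℝ => (w : ℂ) ^ 2) (2 * w) w := by
    have h := hw.fun_mul hw
    simp only [one_mul, mul_one] at h
    simpa [pow_two, two_mul] using h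
  have h2 : HasDerivAt (fun w : ℝ => Complex.I * a * (w : ℂ) - (w : ℂ) ^ 2)
      (Complex.I * a - 2 * w) w := by
    simpa using ((hw.const_mul (Complex.I * a)).fun_sub hsq)
  have h3 : HasDerivAt (hankelE a) ((Complex.I * a - 2 * w) * hankelE a w) w := by
    unfold hankelE
    convert h2.cexp using 1
    ring
  have := h1.fun_mul h3
  refine this.congr_deriv ?_
  unfold hankelE
  have hI : (Complex.I : ℂ) ^ 2 = -1 := Complex.I_sq
  set E := Complex.exp (Complex.I * a * w - (w : ℂ) ^ 2)
  linear_combination (-(E * (a : ℂ) ^ 2 / 4)) * hI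

lemma norm_hankelF_le (ha : 0 < a) (w : ℝ) :
    ‖hankelF a w‖ ≤ (|w| / 2 + a / 4) * Real.exp (-w ^ 2) := by
  unfold hankelF
  rw [norm_mul, norm_hankelE]
  apply mul_le_mul_of_nonneg_right _ (Real.exp_pos _).le
  refine (norm_sub_le _ _).trans ?_
  simp [Complex.norm_real, abs_of_pos ha]

lemma tendsto_hankelF_atTop (ha : 0 < a) : Tendsto (hankelF a) atTop (𝓝 0) := by
  apply squeeze_zero_norm' (a := fun w : ℝ => w ^ 1 * Real.exp (-w))
  · filter_upwards [eventually_ge_atTop (max 1 a)] with w hw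
    have h1 : (1 : ℝ) ≤ w := le_trans (le_max_left _ _) hw
    have h2 : a ≤ w := le_trans (le_max_right _ _) hw
    refine (norm_hankelF_le a ha w).trans ?_
    have hb : |w| / 2 + a / 4 ≤ w ^ 1 := by
      rw [abs_of_pos (by linarith), pow_one]; linarith
    have he : Real.exp (-w ^ 2) ≤ Real.exp (-w) := by
      apply Real.exp_le_exp.mpr; nlinarith
    have h0 : (0:ℝ) ≤ |w|/2 + a/4 := by positivity
    calc (|w| / 2 + a / 4) * Real.exp (-w ^ 2)
        ≤ (w ^ 1) * Real.exp (-w ^ 2) := by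
          exact mul_le_mul_of_nonneg_right hb (Real.exp_pos _).le
      _ ≤ w ^ 1 * Real.exp (-w) := by
          exact mul_le_mul_of_nonneg_left he (by positivity)
  · exact Real.tendsto_pow_mul_exp_neg_atTop_nhds_zero 1

lemma tendsto_hankelF_atBot (ha : 0 < a) : Tendsto (hankelF a) atBot (𝓝 0) := by
  apply squeeze_zero_norm' (a := fun w : ℝ => (-w) ^ 1 * Real.exp (-(-w)))
  · filter_upwards [eventually_le_atBot (min (-1) (-a))] with w hw
    have h1 : w ≤ -1 := le_trans hw (min_le_left _ _)
    have h2 : w ≤ -a := le_trans hw (min_le_right _ _)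
    refine (norm_hankelF_le a ha w).trans ?_
    have hb : |w| / 2 + a / 4 ≤ (-w) ^ 1 := by
      rw [abs_of_neg (by linarith), pow_one]; linarith
    have he : Real.exp (-w ^ 2) ≤ Real.exp (-(-w)) := by
      apply Real.exp_le_exp.mpr; nlinarith
    calc (|w| / 2 + a / 4) * Real.exp (-w ^ 2)
        ≤ ((-w) ^ 1) * Real.exp (-w ^ 2) :=
          mul_le_mul_of_nonneg_right hb (Real.exp_pos _).le
      _ ≤ (-w) ^ 1 * Real.exp (-(-w)) :=
          mul_le_mul_of_nonneg_left he (by nlinarith)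
  · exact (Real.tendsto_pow_mul_exp_neg_atTop_nhds_zero 1).comp tendsto_neg_atBot_atTop

lemma hankel_key (ha : 0 < a) :
    ∫ w : ℝ, (w : ℂ) ^ 2 * hankelE a w
      = -((a : ℂ) ^ 2 / 4 - 1 / 2) * ∫ w : ℝ, hankelE a w := by
  have hint : Integrable (fun w : ℝ =>
      ((w : ℂ) ^ 2 + ((a : ℂ) ^ 2 / 4 - 1 / 2)) * hankelE a w) := by
    have := (integrable_sq_hankelE a).add
      (((integrable_hankelE a)).const_mul ((a : ℂ) ^ 2 / 4 - 1 / 2))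
    refine this.congr ?_
    filter_upwards with w
    simp only [Pi.add_apply]
    ring
  have h0 : ∫ w : ℝ, ((w : ℂ) ^ 2 + ((a : ℂ) ^ 2 / 4 - 1 / 2)) * hankelE a w = 0 := by
    rw [MeasureTheory.integral_of_hasDerivAt_of_tendsto (hasDerivAt_hankelF a) hint
      (tendsto_hankelF_atBot a ha) (tendsto_hankelF_atTop a ha)]
    simp
  have hsplit : ∫ w : ℝ, ((w : ℂ) ^ 2 + ((a : ℂ) ^ 2 / 4 - 1 / 2)) * hankelE a w
      = (∫ w : ℝ, (w : ℂ) ^ 2 * hankelE a w)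
        + ((a : ℂ) ^ 2 / 4 - 1 / 2) * ∫ w : ℝ, hankelE a w := by
    rw [← integral_const_mul, ← integral_add (integrable_sq_hankelE a)
      ((integrable_hankelE a).const_mul _)]
    congr 1; funext w; ring
  rw [hsplit] at h0
  linear_combination h0

lemma hankel_gauss : ∫ w : ℝ, hankelE a w
    = (Real.sqrt Real.pi : ℂ) * Complex.exp (-(a : ℂ) ^ 2 / 4) := by
  have := integral_cexp_quadratic (b := -1) (by norm_num) (Complex.I * a) 0
  simp_rw [← hankelE_eq] at this
  rw [this]
  congr 1
  · rw [show ((Real.pi : ℂ) / -(-1)) = (Real.pi : ℂ) by norm_num,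
      show ((1 : ℂ)/2) = ((1/2 : ℝ) : ℂ) by norm_num,
      ← Complex.ofReal_cpow Real.pi_pos.le, Real.sqrt_eq_rpow]
  · congr 1
    have hI : (Complex.I : ℂ) ^ 2 = -1 := Complex.I_sq
    field_simp
    linear_combination (a:ℂ)^2 * hI

end aux

/-- The basic Hankel-type integral `(1/(2πi)) ∫_L e^{−a√t}√t eᵗ dt`, written in
its flattened form after the substitution `t = −w²` (so `√t = −iw`, the contour
becoming the real line): the contour integral equals
`−(1/π) ∫_{−∞}^{∞} w² e^{−w²} e^{iaw} dw`, and its value is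
`(1/(4√π))·(a² − 2)·e^{−a²/4}` for every real `a > 0`. -/
theorem hankel_integral (a : ℝ) (ha : 0 < a) :
    (-(1 / (Real.pi : ℂ))) *
        ∫ w : ℝ, (w : ℂ) ^ 2 * Complex.exp (Complex.I * a * w - (w : ℂ) ^ 2)
      = ((1 / (4 * Real.sqrt Real.pi) * (a ^ 2 - 2) * Real.exp (-a ^ 2 / 4) : ℝ) : ℂ) := by
  have h1 : ∫ w : ℝ, (w : ℂ) ^ 2 * Complex.exp (Complex.I * a * w - (w : ℂ) ^ 2)
      = ∫ w : ℝ, (w : ℂ) ^ 2 * hankelE a w := rfl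
  rw [h1, hankel_key a ha, hankel_gauss a]
  have hs : (Real.sqrt Real.pi : ℝ) ^ 2 = Real.pi := Real.sq_sqrt Real.pi_pos.le
  have hs0' : ((Real.sqrt Real.pi : ℝ) : ℂ) ≠ 0 := by
    exact_mod_cast (show (Real.sqrt Real.pi : ℝ) ≠ 0 by positivity)
  have hsC : ((Real.sqrt Real.pi : ℝ) : ℂ) ^ 2 = (Real.pi : ℂ) := by exact_mod_cast hs
  rw [Complex.ofReal_mul, Complex.ofReal_mul, Complex.ofReal_exp,
    show ((-a ^ 2 / 4 : ℝ) : ℂ) = -(a : ℂ) ^ 2 / 4 by push_cast; ring, ← hsC]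
  push_cast
  field_simp
  ring
end

section
/- Let y : (0, ρ) → (0, ∞) be a power series with nonnegative coefficients, not a monomial, positive on (0, ρ), and fix x ∈ (0, 1]. Define J(r) = y(r)^x / r for r ∈ (0, ρ). Then the logarithmic derivative J'(r)/J(r) = x(r y'(r)/y(r) − 1/x) is strictly increasing in r; consequently J is unimodal on (0, ρ): it is first decreasing, then increasing (it has at most one interior local minimum and no interior local maximum). -/
open Set

set_option maxHeartbeats 1000000




private lemma pow_cross {r s : ℝ} (hr : 0 < r) (hrs : r < s) {m n : ℕ} (h : n ≤ m) :
    r ^ m * s ^ n ≤ s ^ m * r ^ n := by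
  obtain ⟨k, rfl⟩ := Nat.exists_eq_add_of_le h
  rw [pow_add, pow_add]
  have h1 : r ^ k ≤ s ^ k := pow_le_pow_left₀ hr.le hrs.le k
  nlinarith [mul_nonneg (sub_nonneg.2 h1) (mul_nonneg (pow_nonneg hr.le n) (pow_nonneg (hr.trans hrs).le n))]

private lemma pow_cross_lt {r s : ℝ} (hr : 0 < r) (hrs : r < s) {m n : ℕ} (h : n < m) :
    r ^ m * s ^ n < s ^ m * r ^ n := by
  obtain ⟨k, rfl⟩ := Nat.exists_eq_add_of_le h.le
  have hk : k ≠ 0 := by omega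
  rw [pow_add, pow_add]
  have h1 : r ^ k < s ^ k := pow_lt_pow_left₀ hrs hr.le hk
  nlinarith [mul_pos (sub_pos.2 h1) (mul_pos (pow_pos hr n) (pow_pos (hr.trans hrs) n))]

private lemma core_lt {c : ℕ → ℝ} (hc : ∀ n, 0 ≤ c n) {m₀ n₀ : ℕ}
    (hmn : m₀ ≠ n₀) (hm : c m₀ ≠ 0) (hn : c n₀ ≠ 0)
    {r s Ar As Br Bs : ℝ} (hr : 0 < r) (hrs : r < s)
    (hAr : HasSum (fun n : ℕ => c n * r ^ n) Ar)
    (hAs : HasSum (fun n : ℕ => c n * s ^ n) As)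
    (hBr : HasSum (fun n : ℕ => (n : ℝ) * c n * r ^ n) Br)
    (hBs : HasSum (fun n : ℕ => (n : ℝ) * c n * s ^ n) Bs) :
    Br * As < Bs * Ar := by
  have hs : 0 < s := hr.trans hrs
  have hAnr : ∀ n : ℕ, 0 ≤ c n * r ^ n := fun n => mul_nonneg (hc n) (pow_nonneg hr.le n)
  have hAns : ∀ n : ℕ, 0 ≤ c n * s ^ n := fun n => mul_nonneg (hc n) (pow_nonneg hs.le n)
  have hBnr : ∀ n : ℕ, 0 ≤ (n : ℝ) * c n * r ^ n :=
    fun n => mul_nonneg (mul_nonneg (Nat.cast_nonneg n) (hc n)) (pow_nonneg hr.le n)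
  have hBns : ∀ n : ℕ, 0 ≤ (n : ℝ) * c n * s ^ n :=
    fun n => mul_nonneg (mul_nonneg (Nat.cast_nonneg n) (hc n)) (pow_nonneg hs.le n)
  have hP : HasSum (fun p : ℕ × ℕ => ((p.1 : ℝ) * c p.1 * s ^ p.1) * (c p.2 * r ^ p.2))
      (Bs * Ar) :=
    HasSum.mul (f := fun n : ℕ => (n : ℝ) * c n * s ^ n) (g := fun n : ℕ => c n * r ^ n)
      hBs hAr
      (Summable.mul_of_nonneg (f := fun n : ℕ => (n : ℝ) * c n * s ^ n)
        (g := fun n : ℕ => c n * r ^ n) hBs.summable hAr.summable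
        (Pi.le_def.mpr hBns) (Pi.le_def.mpr hAnr))
  have hQ : HasSum (fun p : ℕ × ℕ => ((p.1 : ℝ) * c p.1 * r ^ p.1) * (c p.2 * s ^ p.2))
      (Br * As) :=
    HasSum.mul (f := fun n : ℕ => (n : ℝ) * c n * r ^ n) (g := fun n : ℕ => c n * s ^ n)
      hBr hAs
      (Summable.mul_of_nonneg (f := fun n : ℕ => (n : ℝ) * c n * r ^ n)
        (g := fun n : ℕ => c n * s ^ n) hBr.summable hAs.summable
        (Pi.le_def.mpr hBnr) (Pi.le_def.mpr hAns))
  set f : ℕ × ℕ → ℝ := fun p => ((p.1 : ℝ) * c p.1 * s ^ p.1) * (c p.2 * r ^ p.2)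
      - ((p.1 : ℝ) * c p.1 * r ^ p.1) * (c p.2 * s ^ p.2) with hfdef
  have hF : HasSum f (Bs * Ar - Br * As) := hP.sub hQ
  have hF2 : HasSum (fun p : ℕ × ℕ => f p.swap) (Bs * Ar - Br * As) :=
    (Equiv.prodComm ℕ ℕ).hasSum_iff.2 hF
  have hG : HasSum (fun p : ℕ × ℕ => f p + f p.swap)
      ((Bs * Ar - Br * As) + (Bs * Ar - Br * As)) := hF.add hF2
  have hkey : ∀ m n : ℕ, f (m, n) + f ((m, n) : ℕ × ℕ).swap
      = (c m * c n) * (((m : ℝ) - n) * (s ^ m * r ^ n - r ^ m * s ^ n)) := by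
    intro m n
    simp only [hfdef, Prod.swap_prod_mk]
    ring
  have hgnonneg : ∀ p : ℕ × ℕ, 0 ≤ f p + f p.swap := by
    rintro ⟨m, n⟩
    rw [hkey]
    rcases le_total n m with h | h
    · have h1 : (0 : ℝ) ≤ (m : ℝ) - n := by
        have := Nat.cast_le (α := ℝ).2 h; linarith
      have h2 : (0 : ℝ) ≤ s ^ m * r ^ n - r ^ m * s ^ n :=
        sub_nonneg.2 (pow_cross hr hrs h)
      exact mul_nonneg (mul_nonneg (hc m) (hc n)) (mul_nonneg h1 h2)
    · have h1 : ((m : ℝ) - n) ≤ 0 := by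
        have := Nat.cast_le (α := ℝ).2 h; linarith
      have h2 : s ^ m * r ^ n - r ^ m * s ^ n ≤ 0 := by
        have := pow_cross hr hrs h
        nlinarith
      exact mul_nonneg (mul_nonneg (hc m) (hc n)) (by nlinarith)
  have hcm : 0 < c m₀ := (hc m₀).lt_of_ne (Ne.symm hm)
  have hcn : 0 < c n₀ := (hc n₀).lt_of_ne (Ne.symm hn)
  have hgpos : 0 < f (m₀, n₀) + f ((m₀, n₀) : ℕ × ℕ).swap := by
    rw [hkey]
    rcases hmn.lt_or_gt with h | h
    · have h1 : ((m₀ : ℝ) - n₀) < 0 := by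
        have := Nat.cast_lt (α := ℝ).2 h; linarith
      have h2 : s ^ m₀ * r ^ n₀ - r ^ m₀ * s ^ n₀ < 0 := by
        have := pow_cross_lt hr hrs h
        nlinarith
      exact mul_pos (mul_pos hcm hcn) (mul_pos_of_neg_of_neg h1 h2)
    · have h1 : (0 : ℝ) < (m₀ : ℝ) - n₀ := by
        have := Nat.cast_lt (α := ℝ).2 h; linarith
      have h2 : 0 < s ^ m₀ * r ^ n₀ - r ^ m₀ * s ^ n₀ :=
        sub_pos.2 (pow_cross_lt hr hrs h)
      exact mul_pos (mul_pos hcm hcn) (mul_pos h1 h2)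
  have hle : f (m₀, n₀) + f ((m₀, n₀) : ℕ × ℕ).swap
      ≤ (Bs * Ar - Br * As) + (Bs * Ar - Br * As) :=
    le_hasSum hG (m₀, n₀) (fun b _ => hgnonneg b)
  linarith




private lemma hasSum_B {ρ : ℝ} {c : ℕ → ℝ} (hc : ∀ n, 0 ≤ c n) {y d : ℝ → ℝ}
    (hy : ∀ r ∈ Ioo 0 ρ, HasSum (fun n : ℕ => c n * r ^ n) (y r))
    (hd : ∀ r ∈ Ioo 0 ρ, HasDerivAt y (d r) r)
    {r : ℝ} (hr : r ∈ Ioo 0 ρ) :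
    HasSum (fun n : ℕ => (n : ℝ) * c n * r ^ n) (r * d r) := by
  obtain ⟨hr0, hrρ⟩ := hr
  set b : ℝ := (r + ρ) / 2 with hbdef
  have hb0 : 0 < b := by simp only [hbdef]; linarith
  have hrb : r < b := by simp only [hbdef]; linarith
  have hbρ : b < ρ := by simp only [hbdef]; linarith
  set b' : ℝ := (b + ρ) / 2 with hb'def
  have hb'0 : 0 < b' := by simp only [hb'def]; linarith
  have hbb' : b < b' := by simp only [hb'def]; linarith
  have hb'ρ : b' < ρ := by simp only [hb'def]; linarith
  -- summability of the term-wise derivative bound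
  have hsumb' : Summable (fun n : ℕ => c n * b' ^ n) := (hy b' ⟨hb'0, hb'ρ⟩).summable
  obtain ⟨M, hM⟩ : BddAbove (Set.range fun n : ℕ => c n * b' ^ n) :=
    hsumb'.tendsto_atTop_zero.bddAbove_range
  have hM' : ∀ n : ℕ, c n * b' ^ n ≤ M := fun n => hM (Set.mem_range_self n)
  set q : ℝ := b / b' with hqdef
  have hq0 : 0 ≤ q := div_nonneg hb0.le hb'0.le
  have hq1 : q < 1 := (div_lt_one hb'0).2 hbb'
  have hgeo : Summable (fun n : ℕ => (n : ℝ) * q ^ n) := by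
    simpa using summable_pow_mul_geometric_of_norm_lt_one 1
      (r := q) (by rw [Real.norm_eq_abs, abs_of_nonneg hq0]; exact hq1)
  have hbq : b = q * b' := by rw [hqdef, div_mul_cancel₀ b hb'0.ne']
  have hv : Summable (fun n : ℕ => (n : ℝ) * c n * b ^ n) := by
    refine Summable.of_nonneg_of_le
      (fun n => mul_nonneg (mul_nonneg (Nat.cast_nonneg n) (hc n)) (pow_nonneg hb0.le n))
      (fun n => ?_) (hgeo.mul_left M)
    have hbn : b ^ n = q ^ n * b' ^ n := by rw [← mul_pow, ← hbq]
    rw [hbn]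
    calc (n : ℝ) * c n * (q ^ n * b' ^ n) = ((n : ℝ) * q ^ n) * (c n * b' ^ n) := by ring
      _ ≤ ((n : ℝ) * q ^ n) * M :=
        mul_le_mul_of_nonneg_left (hM' n)
          (mul_nonneg (Nat.cast_nonneg n) (pow_nonneg hq0 n))
      _ = M * ((n : ℝ) * q ^ n) := by ring
  have hu : Summable (fun n : ℕ => c n * ((n : ℝ) * b ^ (n - 1))) := by
    refine (hv.mul_left b⁻¹).congr fun n => ?_
    cases n with
    | zero => simp
    | succ k =>
      have : b ^ (k + 1) = b ^ k * b := pow_succ b k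
      field_simp [this]
      ring
      rw [Nat.add_sub_cancel_left]
  -- derivative of the sum function
  have hrmem : r ∈ Ioo (0 : ℝ) b := ⟨hr0, hrb⟩
  have hder : ∀ (n : ℕ) (t : ℝ), t ∈ Ioo (0 : ℝ) b →
      HasDerivAt (fun z : ℝ => c n * z ^ n) (c n * ((n : ℝ) * t ^ (n - 1))) t :=
    fun n t _ => (hasDerivAt_pow n t).const_mul (c n)
  have hbound : ∀ (n : ℕ) (t : ℝ), t ∈ Ioo (0 : ℝ) b →
      ‖c n * ((n : ℝ) * t ^ (n - 1))‖ ≤ c n * ((n : ℝ) * b ^ (n - 1)) := by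
    intro n t ht
    rw [Real.norm_eq_abs, abs_of_nonneg (mul_nonneg (hc n)
      (mul_nonneg (Nat.cast_nonneg n) (pow_nonneg ht.1.le _)))]
    have := pow_le_pow_left₀ ht.1.le ht.2.le (n - 1)
    exact mul_le_mul_of_nonneg_left
      (mul_le_mul_of_nonneg_left this (Nat.cast_nonneg n)) (hc n)
  have HD : HasDerivAt (fun z : ℝ => ∑' n : ℕ, c n * z ^ n)
      (∑' n : ℕ, c n * ((n : ℝ) * r ^ (n - 1))) r :=
    hasDerivAt_tsum_of_isPreconnected hu isOpen_Ioo (convex_Ioo (0 : ℝ) b).isPreconnected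
      hder hbound hrmem (hy r ⟨hr0, hrρ⟩).summable hrmem
  have hyD : HasDerivAt y (∑' n : ℕ, c n * ((n : ℝ) * r ^ (n - 1))) r := by
    apply HD.congr_of_eventuallyEq
    filter_upwards [isOpen_Ioo.mem_nhds (⟨hr0, hrρ⟩ : r ∈ Ioo 0 ρ)] with t ht
    exact ((hy t ht).tsum_eq).symm
  have hdD : d r = ∑' n : ℕ, c n * ((n : ℝ) * r ^ (n - 1)) := (hd r ⟨hr0, hrρ⟩).unique hyD
  have hSr : Summable (fun n : ℕ => c n * ((n : ℝ) * r ^ (n - 1))) :=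
    Summable.of_norm_bounded hu (fun n => hbound n r hrmem)
  have hfin : HasSum (fun n : ℕ => r * (c n * ((n : ℝ) * r ^ (n - 1))))
      (r * (∑' n : ℕ, c n * ((n : ℝ) * r ^ (n - 1)))) := hSr.hasSum.mul_left r
  rw [hdD]
  have heq : (fun n : ℕ => (n : ℝ) * c n * r ^ n)
      = fun n : ℕ => r * (c n * ((n : ℝ) * r ^ (n - 1))) := by
    funext n
    cases n with
    | zero => simp
    | succ k =>
      simp only [Nat.succ_sub_one, pow_succ]
      ring
  rw [heq]
  exact hfin


/-- Unimodality of `J(r) = y(r)ˣ/r` for a power series `y` with nonnegative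
coefficients which is not a monomial, positive on `(0, ρ)`, and `x ∈ (0,1]`:
the logarithmic derivative `J'/J = x(r·y'(r)/y(r) − 1/x)` (so that
`J'(r) = J(r)·(x·r·y'(r)/y(r) − 1)/r`) is strictly increasing in `r`, and `J`
is first decreasing then increasing on `(0, ρ)`. -/
theorem J_unimodal (ρ x : ℝ) (hρ : 0 < ρ) (hx : 0 < x ∧ x ≤ 1)
    (c : ℕ → ℝ) (hc : ∀ n, 0 ≤ c n)
    (hnotmono : ∃ m n : ℕ, m ≠ n ∧ c m ≠ 0 ∧ c n ≠ 0)
    (y d : ℝ → ℝ)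
    (hy : ∀ r ∈ Ioo 0 ρ, HasSum (fun n : ℕ => c n * r ^ n) (y r))
    (hypos : ∀ r ∈ Ioo 0 ρ, 0 < y r)
    (hd : ∀ r ∈ Ioo 0 ρ, HasDerivAt y (d r) r) :
    (∀ r ∈ Ioo 0 ρ,
      HasDerivAt (fun r => y r ^ x / r)
        ((y r ^ x / r) * (x * (r * d r / y r) - 1) / r) r) ∧
    StrictMonoOn (fun r => x * (r * d r / y r - 1 / x)) (Ioo 0 ρ) ∧
    ∃ ξ ∈ Icc 0 ρ,
      AntitoneOn (fun r => y r ^ x / r) (Ioo 0 ρ ∩ Iic ξ) ∧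
      MonotoneOn (fun r => y r ^ x / r) (Ioo 0 ρ ∩ Ici ξ) := by
  obtain ⟨hx0, hx1⟩ := hx
  obtain ⟨m₀, n₀, hmn, hm, hn⟩ := hnotmono
  -- Part 1: derivative formula
  have part1 : ∀ r ∈ Ioo 0 ρ,
      HasDerivAt (fun r => y r ^ x / r)
        ((y r ^ x / r) * (x * (r * d r / y r) - 1) / r) r := by
    intro r hr
    have hyr : 0 < y r := hypos r hr
    have hr0 : 0 < r := hr.1
    have h1 : HasDerivAt (fun t => y t ^ x) (d r * x * y r ^ (x - 1)) r :=
      (hd r hr).rpow_const (Or.inl hyr.ne')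
    have h2 : HasDerivAt (fun t => y t ^ x / t)
        ((d r * x * y r ^ (x - 1) * r - y r ^ x * 1) / r ^ 2) r :=
      h1.div (hasDerivAt_id r) hr0.ne'
    convert h2 using 1
    have hpow : y r ^ (x - 1) = y r ^ x / y r := by
      rw [Real.rpow_sub hyr, Real.rpow_one]
    rw [hpow]
    field_simp
  -- Part 2: strict monotonicity of the logarithmic derivative
  have part2 : StrictMonoOn (fun r => x * (r * d r / y r - 1 / x)) (Ioo 0 ρ) := by
    intro a ha b hb hab
    have hBa : HasSum (fun n : ℕ => (n : ℝ) * c n * a ^ n) (a * d a) := hasSum_B hc hy hd ha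
    have hBb : HasSum (fun n : ℕ => (n : ℝ) * c n * b ^ n) (b * d b) := hasSum_B hc hy hd hb
    have key : (a * d a) * y b < (b * d b) * y a :=
      core_lt hc hmn hm hn ha.1 hab (hy a ha) (hy b hb) hBa hBb
    have hda : a * d a / y a < b * d b / y b :=
      (div_lt_div_iff₀ (hypos a ha) (hypos b hb)).2 key
    simp only
    have := sub_lt_sub_right hda (1 / x)
    exact mul_lt_mul_of_pos_left this hx0
  refine ⟨part1, part2, ?_⟩
  -- Part 3: unimodality
  set φ : ℝ → ℝ := fun r => x * (r * d r / y r - 1 / x) with hφdef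
  have hφ : ∀ r, φ r = x * (r * d r / y r) - 1 := by
    intro r
    simp only [hφdef]
    field_simp
  have hJpos : ∀ r ∈ Ioo 0 ρ, 0 < y r ^ x / r :=
    fun r hr => div_pos (Real.rpow_pos_of_pos (hypos r hr) x) hr.1
  have hderiv_eq : ∀ r ∈ Ioo 0 ρ,
      deriv (fun r => y r ^ x / r) r = (y r ^ x / r) * φ r / r := by
    intro r hr
    rw [(part1 r hr).deriv, hφ r]
  have hdiff : ∀ r ∈ Ioo 0 ρ, DifferentiableAt ℝ (fun r => y r ^ x / r) r :=
    fun r hr => (part1 r hr).differentiableAt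
  have hcont : ContinuousOn (fun r => y r ^ x / r) (Ioo 0 ρ) :=
    fun r hr => ((hdiff r hr).continuousAt).continuousWithinAt
  have hneg : ∀ r ∈ Ioo 0 ρ, φ r ≤ 0 → deriv (fun r => y r ^ x / r) r ≤ 0 := by
    intro r hr h
    rw [hderiv_eq r hr]
    have h1 : y r ^ x / r * φ r ≤ 0 := mul_nonpos_of_nonneg_of_nonpos (hJpos r hr).le h
    exact div_nonpos_of_nonpos_of_nonneg h1 hr.1.le
  have hpos : ∀ r ∈ Ioo 0 ρ, 0 ≤ φ r → 0 ≤ deriv (fun r => y r ^ x / r) r := by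
    intro r hr h
    rw [hderiv_eq r hr]
    exact div_nonneg (mul_nonneg (hJpos r hr).le h) hr.1.le
  set S : Set ℝ := {t | t ∈ Ioo 0 ρ ∧ 0 ≤ φ t} with hSdef
  have hbdd : BddBelow S := ⟨0, fun t ht => ht.1.1.le⟩
  by_cases hS : S.Nonempty
  · refine ⟨sInf S, ⟨le_csInf hS (fun t ht => ht.1.1.le), ?_⟩, ?_, ?_⟩
    · obtain ⟨t, ht⟩ := hS
      exact (csInf_le hbdd ht).trans ht.1.2.le
    · -- antitone part
      apply antitoneOn_of_deriv_nonpos ((convex_Ioo 0 ρ).inter (convex_Iic _))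
        (hcont.mono inter_subset_left)
      · rw [interior_inter, isOpen_Ioo.interior_eq, interior_Iic]
        exact fun t ht => (hdiff t ht.1).differentiableWithinAt
      · rw [interior_inter, isOpen_Ioo.interior_eq, interior_Iic]
        intro t ht
        have hφt : φ t ≤ 0 := by
          by_contra hcon
          push_neg at hcon
          exact absurd (csInf_le hbdd ⟨ht.1, hcon.le⟩) (not_le.mpr ht.2)
        exact hneg t ht.1 hφt
    · -- monotone part
      apply monotoneOn_of_deriv_nonneg ((convex_Ioo 0 ρ).inter (convex_Ici _))
        (hcont.mono inter_subset_left)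
      · rw [interior_inter, isOpen_Ioo.interior_eq, interior_Ici]
        exact fun t ht => (hdiff t ht.1).differentiableWithinAt
      · rw [interior_inter, isOpen_Ioo.interior_eq, interior_Ici]
        intro t ht
        obtain ⟨u, hu, hut⟩ := exists_lt_of_csInf_lt hS ht.2
        have : φ u < φ t := part2 hu.1 ht.1 hut
        exact hpos t ht.1 (le_of_lt (lt_of_le_of_lt hu.2 this))
  · refine ⟨ρ, ⟨hρ.le, le_refl ρ⟩, ?_, ?_⟩
    · apply antitoneOn_of_deriv_nonpos ((convex_Ioo 0 ρ).inter (convex_Iic _))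
        (hcont.mono inter_subset_left)
      · rw [interior_inter, isOpen_Ioo.interior_eq, interior_Iic]
        exact fun t ht => (hdiff t ht.1).differentiableWithinAt
      · rw [interior_inter, isOpen_Ioo.interior_eq, interior_Iic]
        intro t ht
        have hφt : φ t ≤ 0 := by
          by_contra hcon
          push_neg at hcon
          exact hS ⟨t, ht.1, hcon.le⟩
        exact hneg t ht.1 hφt
    · intro a ha b hb hab
      exact absurd ha.1.2 (not_lt.mpr ha.2)
end

section
/- Define the generating functions of unrooted ternary trees by diameter via u_{2h+1}(z) = (1/2)g_h(z)^2 + (1/2)g_h(z^2) (for odd diameter 2h+1 ≥ 3) and u_{2h}(z) = (1/6)g_{h-1}(z)^3 + (1/2)g_{h-1}(z^2)g_{h-1}(z) + (1/3)g_{h-1}(z^3) + (1/2)g_{h-1}(z)^2 y_{h-2}(z) + (1/2)g_{h-1}(z^2) y_{h-2}(z) (for even diameter 2h ≥ 4), where g_h = y_{h} − y_{h-1} counts rooted trees of height exactly h. Then these identities, together with u_1(z) = z^2, u_2(z) = z^3, imply the first coefficients of u(z) = ∑_d u_d(z): u(z) = z^2 + z^3 + z^4 + z^5 + 2z^6 +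 2z^7 + 4z^8 + …. -/
open Polynomial

/-- Generating polynomial of rooted Otter trees of height at most `h`. -/
noncomputable def yh : ℕ → Polynomial ℚ
  | 0 => X
  | h + 1 => X + C (1 / 2) * (yh h) ^ 2 + C (1 / 2) * (yh h).comp (X ^ 2)

/-- Generating polynomial of rooted Otter trees of height exactly `h`. -/
noncomputable def g : ℕ → Polynomial ℚ
  | 0 => X
  | h + 1 => yh (h + 1) - yh h

/-- Generating polynomial of unrooted ternary trees of diameter exactly `d`,
via the bicentre (odd `d`) and centre (even `d`) decompositions. -/
noncomputable def u (d : ℕ) : Polynomial ℚ :=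
  if d = 0 then 0
  else if d = 1 then X ^ 2
  else if d = 2 then X ^ 3
  else if d % 2 = 1 then
    -- d = 2h+1, h ≥ 1
    let h := d / 2
    C (1 / 2) * (g h) ^ 2 + C (1 / 2) * (g h).comp (X ^ 2)
  else
    -- d = 2h, h ≥ 2
    let h := d / 2
    C (1 / 6) * (g (h - 1)) ^ 3 + C (1 / 2) * ((g (h - 1)).comp (X ^ 2)) * g (h - 1)
      + C (1 / 3) * (g (h - 1)).comp (X ^ 3)
      + C (1 / 2) * (g (h - 1)) ^ 2 * yh (h - 2)
      + C (1 / 2) * ((g (h - 1)).comp (X ^ 2)) * yh (h - 2)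

/-- Coefficient of `zⁿ` in `u(z) = ∑_d u_d(z)` (a finite sum for each `n`). -/
noncomputable def uCoeff (n : ℕ) : ℚ := ∑ᶠ d : ℕ, (u d).coeff n

/- ### Auxiliary lemmas -/

lemma hc2 : (2 : Polynomial ℚ) * C (1 / 2) = 1 := by
  rw [show (2 : Polynomial ℚ) = C 2 from (map_ofNat C 2).symm, ← C_mul]
  norm_num

lemma hc6 : (6 : Polynomial ℚ) * C (1 / 6) = 1 := by
  rw [show (6 : Polynomial ℚ) = C 6 from (map_ofNat C 6).symm, ← C_mul]
  norm_num

lemma c2eq : (C (1 / 2) : Polynomial ℚ) = 3 * C (1 / 6) := by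
  rw [show (3 : Polynomial ℚ) = C 3 from (map_ofNat C 3).symm, ← C_mul]; norm_num

lemma c3eq : (C (1 / 3) : Polynomial ℚ) = 2 * C (1 / 6) := by
  rw [show (2 : Polynomial ℚ) = C 2 from (map_ofNat C 2).symm, ← C_mul]; norm_num

lemma yh0_eq : yh 0 = X := rfl

lemma yh_succ (h : ℕ) :
    yh (h + 1) = X + C (1 / 2) * (yh h) ^ 2 + C (1 / 2) * (yh h).comp (X ^ 2) := rfl

lemma g0_eq : g 0 = X := rfl

lemma g_succ_def (h : ℕ) : g (h + 1) = yh (h + 1) - yh h := rfl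

lemma yh1_eq : yh 1 = X + X ^ 2 := by
  rw [yh_succ, yh0_eq, X_comp]
  linear_combination (X ^ 2 : Polynomial ℚ) * hc2

lemma yh2_eq : yh 2 = X + X ^ 2 + X ^ 3 + X ^ 4 := by
  rw [yh_succ, yh1_eq]
  simp only [add_comp, X_comp, X_pow_comp]
  linear_combination (X ^ 2 + X ^ 3 + X ^ 4 : Polynomial ℚ) * hc2

lemma yh3_eq : yh 3 = X + X ^ 2 + X ^ 3 + C 2 * X ^ 4 + C 2 * X ^ 5 + C 2 * X ^ 6
    + X ^ 7 + X ^ 8 := by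
  rw [yh_succ, yh2_eq]
  simp only [add_comp, X_comp, X_pow_comp, map_ofNat]
  linear_combination (X ^ 2 + X ^ 3 + 2 * X ^ 4 + 2 * X ^ 5 + 2 * X ^ 6
    + X ^ 7 + X ^ 8 : Polynomial ℚ) * hc2

lemma g1_eq : g 1 = X ^ 2 := by
  rw [g_succ_def, yh1_eq, yh0_eq]; ring

lemma g2_eq : g 2 = X ^ 3 + X ^ 4 := by
  rw [g_succ_def, yh2_eq, yh1_eq]; ring

lemma g3_eq : g 3 = X ^ 4 + C 2 * X ^ 5 + C 2 * X ^ 6 + X ^ 7 + X ^ 8 := by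
  rw [g_succ_def, yh3_eq, yh2_eq]; simp only [map_ofNat]; ring

/- ### Divisibility lemmas -/

lemma X_dvd_yh : ∀ h : ℕ, X ∣ yh h
  | 0 => dvd_rfl
  | h + 1 => by
    obtain ⟨q, hq⟩ := X_dvd_yh h
    rw [yh_succ, hq, mul_comp, X_comp]
    exact ⟨1 + C (1 / 2) * X * q ^ 2 + C (1 / 2) * X * q.comp (X ^ 2), by ring⟩

lemma comp_pow_dvd {k : ℕ} {p : Polynomial ℚ} (m : ℕ) (h : X ^ k ∣ p) :
    X ^ (k * m) ∣ p.comp (X ^ m) := by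
  obtain ⟨q, hq⟩ := h
  rw [hq, mul_comp, X_pow_comp, ← pow_mul, mul_comm m k]
  exact Dvd.dvd.mul_right dvd_rfl _

lemma g_succ_eq (h : ℕ) : g (h + 2) =
    C (1 / 2) * g (h + 1) * (yh (h + 1) + yh h)
      + C (1 / 2) * (g (h + 1)).comp (X ^ 2) := by
  rw [g_succ_def, yh_succ (h + 1), g_succ_def h, sub_comp]
  linear_combination -(yh_succ h)

lemma X_pow_dvd_g : ∀ h : ℕ, X ^ (h + 1) ∣ g h
  | 0 => by rw [g0_eq, pow_one]
  | 1 => by rw [g1_eq]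
  | h + 2 => by
    have ih := X_pow_dvd_g (h + 1)
    rw [g_succ_eq]
    refine dvd_add ?_ ?_
    · have hx : X ∣ yh (h + 1) + yh h := dvd_add (X_dvd_yh _) (X_dvd_yh _)
      have h1 : X ^ (h + 2) * X ∣ g (h + 1) * (yh (h + 1) + yh h) := mul_dvd_mul ih hx
      rw [show X ^ (h + 2) * X = X ^ (h + 3) by ring] at h1
      rw [mul_assoc]
      exact h1.mul_left _
    · have h1 : X ^ ((h + 2) * 2) ∣ (g (h + 1)).comp (X ^ 2) := comp_pow_dvd 2 ih
      exact ((pow_dvd_pow X (by omega)).trans h1).mul_left _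

lemma u_odd (h : ℕ) (hh : 1 ≤ h) :
    u (2 * h + 1) = C (1 / 2) * (g h) ^ 2 + C (1 / 2) * (g h).comp (X ^ 2) := by
  have h0 : (2 * h + 1) % 2 = 1 := by omega
  have h1 : (2 * h + 1) / 2 = h := by omega
  rw [u, if_neg (by omega), if_neg (by omega), if_neg (by omega), if_pos h0]
  simp only [h1]

lemma u_even (h : ℕ) (hh : 2 ≤ h) :
    u (2 * h) = C (1 / 6) * (g (h - 1)) ^ 3
      + C (1 / 2) * ((g (h - 1)).comp (X ^ 2)) * g (h - 1)
      + C (1 / 3) * (g (h - 1)).comp (X ^ 3)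
      + C (1 / 2) * (g (h - 1)) ^ 2 * yh (h - 2)
      + C (1 / 2) * ((g (h - 1)).comp (X ^ 2)) * yh (h - 2) := by
  have h0 : ¬ (2 * h) % 2 = 1 := by omega
  have h1 : (2 * h) / 2 = h := by omega
  rw [u, if_neg (by omega), if_neg (by omega), if_neg (by omega), if_neg h0]
  simp only [h1]

lemma X_pow_dvd_u (d : ℕ) : X ^ (d + 1) ∣ u d := by
  match d with
  | 0 => rw [show u 0 = 0 from rfl]; exact dvd_zero _
  | 1 => rw [show u 1 = X ^ 2 from rfl]
  | 2 => rw [show u 2 = X ^ 3 from rfl]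
  | d + 3 =>
    rcases Nat.even_or_odd (d + 3) with he | ho
    · obtain ⟨h, hd⟩ := he
      have hh : 2 ≤ h := by omega
      have hd' : d + 3 = 2 * h := by omega
      rw [hd', u_even h hh]
      have hg : X ^ h ∣ g (h - 1) := by
        have := X_pow_dvd_g (h - 1)
        rwa [show h - 1 + 1 = h by omega] at this
      have hy : X ∣ yh (h - 2) := X_dvd_yh _
      refine dvd_add (dvd_add (dvd_add (dvd_add ?_ ?_) ?_) ?_) ?_
      · refine ((pow_dvd_pow X (show 2 * h + 1 ≤ 3 * h by omega)).trans ?_).mul_left _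
        rw [show 3 * h = h + (h + h) by ring, pow_add, pow_add,
          show g (h - 1) ^ 3 = g (h - 1) * (g (h - 1) * g (h - 1)) by ring]
        exact mul_dvd_mul hg (mul_dvd_mul hg hg)
      · rw [mul_assoc]
        refine ((pow_dvd_pow X (show 2 * h + 1 ≤ h * 2 + h by omega)).trans ?_).mul_left _
        rw [pow_add]
        exact mul_dvd_mul (comp_pow_dvd 2 hg) hg
      · refine ((pow_dvd_pow X (show 2 * h + 1 ≤ h * 3 by omega)).trans ?_).mul_left _
        exact comp_pow_dvd 3 hg
      · have hgg : X ^ (h + h) ∣ g (h - 1) ^ 2 := by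
          rw [pow_add, sq]; exact mul_dvd_mul hg hg
        rw [show 2 * h + 1 = (h + h) + 1 by ring, pow_add, pow_one, mul_assoc]
        exact (mul_dvd_mul hgg hy).mul_left _
      · have hgc := comp_pow_dvd 2 hg
        rw [show 2 * h + 1 = h * 2 + 1 by ring, pow_add, pow_one, mul_assoc]
        exact (mul_dvd_mul hgc hy).mul_left _
    · obtain ⟨h, hd⟩ := ho
      have hh : 1 ≤ h := by omega
      rw [show d + 3 = 2 * h + 1 by omega, u_odd h hh]
      refine dvd_add ?_ ?_
      · have := mul_dvd_mul (X_pow_dvd_g h) (X_pow_dvd_g h)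
        rw [← pow_add, ← sq] at this
        rw [show 2 * h + 1 + 1 = (h + 1) + (h + 1) by ring]
        exact this.mul_left _
      · have h1 : X ^ ((h + 1) * 2) ∣ (g h).comp (X ^ 2) := comp_pow_dvd 2 (X_pow_dvd_g h)
        exact ((pow_dvd_pow X (by omega)).trans h1).mul_left _

lemma u_coeff_eq_zero {d n : ℕ} (hdn : n ≤ d) : (u d).coeff n = 0 :=
  (Polynomial.X_pow_dvd_iff.1 (X_pow_dvd_u d)) n (by omega)

/- ### Closed forms for `u d`, `d ≤ 8` -/

lemma u0_eq : u 0 = 0 := rfl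
lemma u1_eq : u 1 = X ^ 2 := rfl
lemma u2_eq : u 2 = X ^ 3 := rfl

lemma u3_eq : u 3 = X ^ 4 := by
  rw [show (3 : ℕ) = 2 * 1 + 1 by norm_num, u_odd 1 le_rfl, g1_eq, X_pow_comp]
  linear_combination (X ^ 4 : Polynomial ℚ) * hc2

lemma u5_eq : u 5 = X ^ 6 + X ^ 7 + X ^ 8 := by
  rw [show (5 : ℕ) = 2 * 2 + 1 by norm_num, u_odd 2 (by norm_num), g2_eq]
  simp only [add_comp, X_pow_comp]
  linear_combination (X ^ 6 + X ^ 7 + X ^ 8 : Polynomial ℚ) * hc2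

lemma u7_eq : u 7 = X ^ 8 + C 2 * X ^ 9 + C 5 * X ^ 10 + C 5 * X ^ 11 + C 6 * X ^ 12
    + C 4 * X ^ 13 + C 3 * X ^ 14 + X ^ 15 + X ^ 16 := by
  rw [show (7 : ℕ) = 2 * 3 + 1 by norm_num, u_odd 3 (by norm_num), g3_eq]
  simp only [add_comp, mul_comp, C_comp, X_pow_comp]
  simp only [map_ofNat]
  linear_combination (X ^ 8 + 2 * X ^ 9 + 5 * X ^ 10 + 5 * X ^ 11 + 6 * X ^ 12
    + 4 * X ^ 13 + 3 * X ^ 14 + X ^ 15 + X ^ 16 : Polynomial ℚ) * hc2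

lemma u4_eq : u 4 = X ^ 5 + X ^ 6 := by
  rw [show (4 : ℕ) = 2 * 2 by norm_num, u_even 2 le_rfl]
  simp only [show (2:ℕ) - 1 = 1 from rfl, show (2:ℕ) - 2 = 0 from rfl, g1_eq, yh0_eq,
    X_pow_comp, map_ofNat]
  rw [c2eq, c3eq]
  linear_combination (X ^ 5 + X ^ 6 : Polynomial ℚ) * hc6

lemma u6_eq : u 6 = X ^ 7 + C 2 * X ^ 8 + C 3 * X ^ 9 + C 2 * X ^ 10 + X ^ 11 + X ^ 12 := by
  rw [show (6 : ℕ) = 2 * 3 by norm_num, u_even 3 (by norm_num)]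
  simp only [show (3:ℕ) - 1 = 2 from rfl, show (3:ℕ) - 2 = 1 from rfl, g2_eq, yh1_eq,
    add_comp, X_pow_comp]
  simp only [map_ofNat]
  rw [c2eq, c3eq]
  linear_combination (X ^ 7 + 2 * X ^ 8 + 3 * X ^ 9 + 2 * X ^ 10 + X ^ 11
    + X ^ 12 : Polynomial ℚ) * hc6

lemma u8_eq : u 8 = X ^ 9 + C 3 * X ^ 10 + C 8 * X ^ 11 + C 14 * X ^ 12 + C 20 * X ^ 13
    + C 25 * X ^ 14 + C 27 * X ^ 15 + C 26 * X ^ 16 + C 22 * X ^ 17 + C 19 * X ^ 18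
    + C 12 * X ^ 19 + C 9 * X ^ 20 + C 5 * X ^ 21 + C 3 * X ^ 22 + X ^ 23 + X ^ 24 := by
  rw [show (8 : ℕ) = 2 * 4 by norm_num, u_even 4 (by norm_num)]
  simp only [show (4:ℕ) - 1 = 3 from rfl, show (4:ℕ) - 2 = 2 from rfl, g3_eq, yh2_eq,
    add_comp, mul_comp, C_comp, X_pow_comp]
  simp only [map_ofNat]
  rw [c2eq, c3eq]
  linear_combination (X ^ 9 + 3 * X ^ 10 + 8 * X ^ 11 + 14 * X ^ 12 + 20 * X ^ 13
    + 25 * X ^ 14 + 27 * X ^ 15 + 26 * X ^ 16 + 22 * X ^ 17 + 19 * X ^ 18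
    + 12 * X ^ 19 + 9 * X ^ 20 + 5 * X ^ 21 + 3 * X ^ 22 + X ^ 23
    + X ^ 24 : Polynomial ℚ) * hc6

/- ### The finite sum -/

lemma uCoeff_eq_sum (n : ℕ) (hn : n ≤ 8) :
    uCoeff n = ∑ d ∈ Finset.range 9, (u d).coeff n := by
  refine finsum_eq_finset_sum_of_support_subset _ ?_
  intro d hd
  simp only [Function.mem_support] at hd
  simp only [Finset.coe_range, Set.mem_Iio]
  by_contra hd9
  exact hd (u_coeff_eq_zero (by omega))

/-- First coefficients of `u(z)`: `u(z) = z² + z³ + z⁴ + z⁵ + 2z⁶ + 2z⁷ + 4z⁸ + ⋯`. -/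
theorem u_initial_coeffs :
    uCoeff 2 = 1 ∧ uCoeff 3 = 1 ∧ uCoeff 4 = 1 ∧ uCoeff 5 = 1 ∧
    uCoeff 6 = 2 ∧ uCoeff 7 = 2 ∧ uCoeff 8 = 4 := by
  refine ⟨?_, ?_, ?_, ?_, ?_, ?_, ?_⟩ <;>
  · rw [uCoeff_eq_sum _ (by norm_num)]
    norm_num [Finset.sum_range_succ, u0_eq, u1_eq, u2_eq, u3_eq, u4_eq, u5_eq, u6_eq,
      u7_eq, u8_eq, coeff_X_pow, coeff_C_mul]
end
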